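/- arXiv:2205.14185 — 2 statements merged into one kernel-verified Lean document; each statement's English description precedes it below -/
import Mathlib

section
/- Depth-2 Fay correction of the exponential (§3.3): Let Q ∈ ARI and let E := exp_mu(Q). Then ℱ(E)(u_1,u_2) = ℱ(Q)(u_1,u_2) + (1/2)·( E(u_1)·E(u_2) + E(−u_1)·E(u_1+u_2) + E(u_2)·E(−u_1−u_2) ). -/
/-!
Moulds over ℚ: a mould is a family `A = (A_r)_{r ≥ 0}` where `A_r` lies in the
field `ℚ(u_1, …, u_r)` of rational functions in `r` commuting variables,
realized here as the fraction field of `MvPolynomial (Fin r) ℚ`.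
Substitution of ℚ-linearly independent linear forms is realized by lifting the
corresponding (injective) polynomial substitution map to the fraction fields.
-/

noncomputable section

/-- The polynomial ring `ℚ[u_1, …, u_r]` (variables are 0-indexed). -/
abbrev MPoly (r : ℕ) : Type := MvPolynomial (Fin r) ℚ

/-- The field of rational functions `ℚ(u_1, …, u_r)`. -/
abbrev MFrac (r : ℕ) : Type := FractionRing (MPoly r)

/-- A mould over ℚ: its depth-`r` part is a rational function of `r` variables;
its depth-`0` part is a constant. -/
abbrev Mould : Type := (r : ℕ) → MFrac r

/-- The canonical embedding of polynomials into rational functions. -/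
def toF {r : ℕ} (p : MPoly r) : MFrac r := algebraMap (MPoly r) (MFrac r) p

/-- The constant `q` viewed as a rational function in `r` variables. -/
def constF (r : ℕ) (q : ℚ) : MFrac r := toF (MvPolynomial.C q)

/-- The variable `u_{k+1}` (0-indexed: `X k`), with junk value `0` out of range. -/
def Xn (r k : ℕ) : MPoly r := if h : k < r then MvPolynomial.X ⟨k, h⟩ else 0

/-- The linear form `u_1 + ⋯ + u_n`. -/
def sumXn (r n : ℕ) : MPoly r := ∑ k ∈ Finset.range n, Xn r k

/-- Substitution `A(ℓ_1, …, ℓ_s)` of a family of polynomials (in applications: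
ℚ-linearly independent linear forms in `u_1, …, u_r`) into a rational function
`A ∈ ℚ(u_1,…,u_s)`, obtained by lifting the polynomial substitution map to the
fraction fields; junk value `0` if the substitution map is not injective
(which never occurs for linearly independent linear forms). -/
def msubst {s r : ℕ} (ℓ : Fin s → MPoly r) (A : MFrac s) : MFrac r := by
  classical
  exact if h : Function.Injective ((algebraMap (MPoly r) (MFrac r)).comp
      (MvPolynomial.aeval (R := ℚ) ℓ).toRingHom)
    then IsFractionRing.lift h A else 0

/-! ### The basic mould operators -/

/-- Arguments of the swap: `(swap A)(v_1,…,v_r) = A(v_r, v_{r-1}-v_r, …, v_1-v_2)`. -/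
def swapArgs (r : ℕ) : Fin r → MPoly r := fun m => Xn r (r - 1 - m.val) - Xn r (r - m.val)

/-- The swap of a mould. -/
def swapM (A : Mould) : Mould := fun r => msubst (swapArgs r) (A r)

/-- `(push_u A)(u_1,…,u_r) = A(−u_1−⋯−u_r, u_1,…,u_{r−1})`. -/
def pushArgs (r : ℕ) : Fin r → MPoly r := fun m =>
  if m.val = 0 then -(sumXn r r) else Xn r (m.val - 1)

def pushU (A : Mould) : Mould := fun r => msubst (pushArgs r) (A r)

/-- `(push_u⁻¹ A)(u_1,…,u_r) = A(u_2,…,u_r, −u_1−⋯−u_r)`. -/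
def pushInvArgs (r : ℕ) : Fin r → MPoly r := fun m =>
  if m.val = r - 1 then -(sumXn r r) else Xn r (m.val + 1)

def pushUInv (A : Mould) : Mould := fun r => msubst (pushInvArgs r) (A r)

/-- `(push_v B)(v_1,…,v_r) = B(−v_r, v_1−v_r, …, v_{r−1}−v_r)`. -/
def pushVArgs (r : ℕ) : Fin r → MPoly r := fun m =>
  if m.val = 0 then -(Xn r (r - 1)) else Xn r (m.val - 1) - Xn r (r - 1)

def pushV (A : Mould) : Mould := fun r => msubst (pushVArgs r) (A r)

/-- `(push_v⁻¹ B)(v_1,…,v_r) = B(v_2−v_1, …, v_r−v_1, −v_1)`. -/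
def pushVInvArgs (r : ℕ) : Fin r → MPoly r := fun m =>
  if m.val = r - 1 then -(Xn r 0) else Xn r (m.val + 1) - Xn r 0

def pushVInv (A : Mould) : Mould := fun r => msubst (pushVInvArgs r) (A r)

/-- `(circ B)(v_1,…,v_r) = B(v_2,…,v_r,v_1)`. -/
def circArgs (r : ℕ) : Fin r → MPoly r := fun m =>
  if m.val = r - 1 then Xn r 0 else Xn r (m.val + 1)

def circM (A : Mould) : Mould := fun r => msubst (circArgs r) (A r)

/-- `(dur A)(u_1,…,u_r) = (u_1+⋯+u_r)·A(u_1,…,u_r)`. -/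
def durM (A : Mould) : Mould := fun r => toF (sumXn r r) * A r

/-- `(dar A)(u_1,…,u_r) = u_1⋯u_r·A(u_1,…,u_r)`. -/
def darM (A : Mould) : Mould := fun r => toF (∏ k ∈ Finset.range r, Xn r k) * A r

/-- `(dar⁻¹ A)(u_1,…,u_r) = A(u_1,…,u_r)/(u_1⋯u_r)`. -/
def darInv (A : Mould) : Mould := fun r => A r / toF (∏ k ∈ Finset.range r, Xn r k)

/-- `Δ = dar ∘ dur`. -/
def deltaM (A : Mould) : Mould := darM (durM A)

/-- `Δ⁻¹`, dividing the depth-`r` part by `u_1⋯u_r·(u_1+⋯+u_r)`. -/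
def deltaInv (A : Mould) : Mould := fun r =>
  A r / toF ((∏ k ∈ Finset.range r, Xn r k) * sumXn r r)

/-! ### The Fay operator -/

/-- Arguments of the `i`-th Fay term (`1 ≤ i ≤ r`):
`(u_2,…,u_i, −ū_i, ū_{i+1}, u_{i+2},…,u_r)` for `i < r`, and
`(u_2,…,u_r, −ū_r)` for `i = r`, where `ū_i = u_1+⋯+u_i`. -/
def fayArgs (r i : ℕ) : Fin r → MPoly r := fun m =>
  if m.val + 1 < i then Xn r (m.val + 1)
  else if m.val + 1 = i then -(sumXn r i)
  else if m.val = i then sumXn r (i + 1)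
  else Xn r m.val

/-- The Fay operator:
`ℱ(B)(u_1,…,u_r) = B(u_1,…,u_r) + B(u_2,…,u_r,−ū_r) + Σ_{i=1}^{r−1} B(u_2,…,u_i,−ū_i,ū_{i+1},u_{i+2},…,u_r)`. -/
def Fay (A : Mould) : Mould := fun r =>
  A r + ∑ i ∈ Finset.Icc 1 r, msubst (fayArgs r i) (A r)

/-! ### Shuffles, alternality, push-invariance and circ-neutrality -/

/-- Arguments realizing the shuffle of `(u_1,…,u_k)` and `(u_{k+1},…,u_r)` whose
set of positions for the first word is `S` (with `S.card = k`). -/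
def shuffleArgs (r : ℕ) (S : Finset (Fin r)) : Fin r → MPoly r := fun m =>
  if m ∈ S then Xn r ((S.filter (fun x => x < m)).card)
  else Xn r (S.card + ((Sᶜ.filter (fun x => x < m)).card))

/-- A mould is alternal if all its shuffle sums
`A(sh((u_1,…,u_k),(u_{k+1},…,u_r)))` for `1 ≤ k ≤ r−1` vanish. -/
def Alternal (A : Mould) : Prop :=
  ∀ r k : ℕ, 1 ≤ k → k < r →
    ∑ S ∈ Finset.powersetCard k (Finset.univ : Finset (Fin r)),
      msubst (shuffleArgs r S) (A r) = 0

/-- A mould is push-invariant if `push_u A = A` in every depth `r ≥ 1`. -/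
def PushInvariant (A : Mould) : Prop := ∀ r : ℕ, 1 ≤ r → pushU A r = A r

/-- Arguments of the `i`-th term (`1 ≤ i ≤ r`) of the shuffle sum
`B(sh((v_1),(v_2,…,v_r)))`, namely `(v_2,…,v_i, v_1, v_{i+1},…,v_r)`. -/
def sh1Args (r i : ℕ) : Fin r → MPoly r := fun m =>
  if m.val + 1 < i then Xn r (m.val + 1)
  else if m.val + 1 = i then Xn r 0
  else Xn r m.val

/-! ### Mould multiplication, `arat`, and exponentials -/

/-- Arguments `(u_{a+1}, …, u_{a+s})` (a consecutive segment of variables). -/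
def segArgs (r a : ℕ) {s : ℕ} : Fin s → MPoly r := fun m => Xn r (a + m.val)

/-- Arguments `(u_1,…,u_{a−1}, u_a+⋯+u_b, u_{b+1},…,u_r)` (the block `u_a…u_b`
merged into a single sum), of length `s = r − (b − a)`. -/
def mergeArgs (r a b : ℕ) {s : ℕ} : Fin s → MPoly r := fun m =>
  if m.val + 1 < a then Xn r m.val
  else if m.val + 1 = a then ∑ k ∈ Finset.Icc (a - 1) (b - 1), Xn r k
  else Xn r (b + m.val - a)

/-- The mould `arat(M)·Q`. -/
def arat (M Q : Mould) : Mould := fun r =>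
  (∑ i ∈ Finset.Icc 1 (r - 1), ∑ j ∈ Finset.Icc (i + 1) (r - 1),
      msubst (segArgs r i) (M (j - i)) *
        (msubst (mergeArgs r i j) (Q (r - (j - i))) -
          msubst (mergeArgs r (i + 1) (j + 1)) (Q (r - (j - i)))))
  + (∑ i ∈ Finset.Icc 1 (r - 1),
      msubst (segArgs r 0) (M i) *
        (msubst (segArgs r i) (Q (r - i)) - msubst (mergeArgs r 1 (i + 1)) (Q (r - i))))
  + (∑ i ∈ Finset.Icc 1 (r - 1),
      msubst (segArgs r i) (M (r - i)) *
        (msubst (mergeArgs r i r) (Q i) - msubst (segArgs r 0) (Q i)))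

/-- Mould multiplication `mu(A,B)(u_1,…,u_r) = Σ_i A(u_1,…,u_i)B(u_{i+1},…,u_r)`. -/
def muM (A B : Mould) : Mould := fun r =>
  ∑ i ∈ Finset.range (r + 1), msubst (segArgs r 0) (A i) * msubst (segArgs r i) (B (r - i))

/-- The unit mould for `mu`. -/
def oneMould : Mould := fun r => if r = 0 then 1 else 0

/-- `mu`-powers of a mould. -/
def muPow (Q : Mould) : ℕ → Mould
  | 0 => oneMould
  | n + 1 => muM (muPow Q n) Q

/-- `exp_mu(Q) = Σ_{n≥0} Q^{·n}/n!`; for `Q ∈ ARI` this is a finite sum in each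
depth, since `Q^{·n}` vanishes in depths `< n`. -/
def expMu (Q : Mould) : Mould := fun r =>
  ∑ n ∈ Finset.range (r + 1), constF r (1 / (n.factorial : ℚ)) * muPow Q n r

/-!
Since `Q(∅) = 0`, the `mu`-power `Q^{·n}` vanishes below depth `n`, so in depths `1` and `2`
the exponential is `E = Q + ½ Q·Q`, i.e. `E(u_1) = Q(u_1)` and
`E(u_1,u_2) = Q(u_1,u_2) + ½ Q(u_1)Q(u_2)`. Each term of the Fay operator is a substitution of
linear forms with a linear inverse, hence a field embedding of `ℚ(u_1,u_2)` into itself, so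
`ℱ(E) − ℱ(Q) = ½ ℱ(Q(u_1)Q(u_2))` in depth `2`, and the two Fay substitutions send
`Q(u_1)Q(u_2)` to `Q(−u_1)Q(u_1+u_2)` and `Q(u_2)Q(−u_1−u_2)`.
-/

open MvPolynomial

section Substitution

variable {s r t : ℕ}

lemma injective_aeval_of_leftInverse {ℓ : Fin s → MPoly r} (g : Fin r → MPoly s)
    (h : ∀ m, aeval g (ℓ m) = X m) : Function.Injective (aeval (R := ℚ) ℓ) := by
  refine Function.LeftInverse.injective (g := aeval g) fun p => ?_
  rw [← AlgHom.comp_apply, comp_aeval, funext h, aeval_X_left_apply]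

lemma injective_algebraMap_comp_aeval {ℓ : Fin s → MPoly r}
    (hℓ : Function.Injective (aeval (R := ℚ) ℓ)) :
    Function.Injective ((algebraMap (MPoly r) (MFrac r)).comp (aeval (R := ℚ) ℓ).toRingHom) :=
  (IsFractionRing.injective (MPoly r) (MFrac r)).comp hℓ

lemma msubst_eq_lift {ℓ : Fin s → MPoly r} (hℓ : Function.Injective (aeval (R := ℚ) ℓ)) :
    msubst ℓ = IsFractionRing.lift (injective_algebraMap_comp_aeval hℓ) := by
  funext A
  rw [msubst, dif_pos (injective_algebraMap_comp_aeval hℓ)]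

lemma msubst_zero (ℓ : Fin s → MPoly r) : msubst ℓ 0 = 0 := by
  unfold msubst
  split <;> simp

lemma msubst_one {ℓ : Fin s → MPoly r} (hℓ : Function.Injective (aeval (R := ℚ) ℓ)) :
    msubst ℓ 1 = 1 := by
  rw [msubst_eq_lift hℓ, map_one]

lemma msubst_add {ℓ : Fin s → MPoly r} (hℓ : Function.Injective (aeval (R := ℚ) ℓ))
    (A B : MFrac s) : msubst ℓ (A + B) = msubst ℓ A + msubst ℓ B := by
  rw [msubst_eq_lift hℓ, map_add]

lemma msubst_mul {ℓ : Fin s → MPoly r} (hℓ : Function.Injective (aeval (R := ℚ) ℓ))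
    (A B : MFrac s) : msubst ℓ (A * B) = msubst ℓ A * msubst ℓ B := by
  rw [msubst_eq_lift hℓ, map_mul]

lemma msubst_toF {ℓ : Fin s → MPoly r} (hℓ : Function.Injective (aeval (R := ℚ) ℓ))
    (p : MPoly s) : msubst ℓ (toF p) = toF (aeval ℓ p) := by
  rw [msubst_eq_lift hℓ, toF, IsFractionRing.lift_algebraMap]
  rfl

lemma msubst_constF {ℓ : Fin s → MPoly r} (hℓ : Function.Injective (aeval (R := ℚ) ℓ))
    (q : ℚ) : msubst ℓ (constF s q) = constF r q := by
  rw [constF, msubst_toF hℓ, aeval_C]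
  rfl

lemma msubst_X (A : MFrac r) : msubst X A = A := by
  have hX : Function.Injective (aeval (R := ℚ) (X : Fin r → MPoly r)) :=
    injective_aeval_of_leftInverse X fun m => aeval_X X m
  have hid : IsFractionRing.lift (injective_algebraMap_comp_aeval hX) = RingHom.id (MFrac r) :=
    IsLocalization.ringHom_ext (nonZeroDivisors (MPoly r))
      (RingHom.ext fun p => by simp [IsFractionRing.lift_algebraMap])
  rw [msubst_eq_lift hX, hid, RingHom.id_apply]

lemma msubst_msubst {ℓ : Fin s → MPoly r} (hℓ : Function.Injective (aeval (R := ℚ) ℓ))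
    {ℓ' : Fin t → MPoly s} (hℓ' : Function.Injective (aeval (R := ℚ) ℓ')) (A : MFrac t) :
    msubst ℓ (msubst ℓ' A) = msubst (fun m => aeval ℓ (ℓ' m)) A := by
  have hcomp : Function.Injective (aeval (R := ℚ) fun m => aeval ℓ (ℓ' m)) := by
    rw [← comp_aeval]
    exact hℓ.comp hℓ'
  rw [msubst_eq_lift hℓ, msubst_eq_lift hℓ', msubst_eq_lift hcomp, ← RingHom.comp_apply]
  refine RingHom.congr_fun (IsLocalization.ringHom_ext (nonZeroDivisors (MPoly t))
    (RingHom.ext fun p => ?_)) A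
  simp [IsFractionRing.lift_algebraMap, ← comp_aeval]

end Substitution

lemma segArgs_zero_self (r : ℕ) : (segArgs r 0 : Fin r → MPoly r) = X := by
  funext m
  simp [segArgs, Xn, m.isLt]

lemma segArgs_two_fin_one (a : ℕ) : (segArgs 2 a : Fin 1 → MPoly 2) = fun _ => Xn 2 a := by
  funext m
  simp [segArgs]

lemma muM_oneMould_left (A : Mould) : muM oneMould A = A := by
  funext r
  have hinj : Function.Injective (aeval (R := ℚ) (segArgs r 0 : Fin 0 → MPoly r)) :=
    injective_aeval_of_leftInverse 0 fun m => m.elim0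
  rw [muM, Finset.sum_eq_single 0]
  · simp [oneMould, msubst_one hinj, segArgs_zero_self, msubst_X]
  · intro i _ hi
    simp [oneMould, hi, msubst_zero]
  · simp

lemma muPow_zero_of_ne_zero (Q : Mould) {r : ℕ} (hr : r ≠ 0) : muPow Q 0 r = 0 :=
  if_neg hr

lemma muPow_one (Q : Mould) : muPow Q 1 = Q :=
  muM_oneMould_left Q

lemma muPow_eq_zero_of_lt {Q : Mould} (hQ0 : Q 0 = 0) {n r : ℕ} (h : r < n) :
    muPow Q n r = 0 := by
  induction n generalizing r with
  | zero => exact absurd h (Nat.not_lt_zero r)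
  | succ n ih =>
    rw [muPow, muM]
    refine Finset.sum_eq_zero fun i hi => ?_
    have hir : i ≤ r := Nat.lt_succ_iff.mp (Finset.mem_range.mp hi)
    by_cases hin : i < n
    · rw [ih hin, msubst_zero, zero_mul]
    · rw [show r - i = 0 by omega, hQ0, msubst_zero, mul_zero]

lemma muM_two {A B : Mould} (hA : A 0 = 0) (hB : B 0 = 0) :
    muM A B 2 =
      msubst (fun _ : Fin 1 => Xn 2 0) (A 1) * msubst (fun _ : Fin 1 => Xn 2 1) (B 1) := by
  simp [muM, Finset.sum_range_succ, hA, hB, msubst_zero, segArgs_two_fin_one]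

lemma expMu_one {Q : Mould} : expMu Q 1 = Q 1 := by
  simp [expMu, Finset.sum_range_succ, muPow_zero_of_ne_zero, muPow_one, constF, toF]

lemma expMu_two {Q : Mould} (hQ0 : Q 0 = 0) :
    expMu Q 2 = Q 2 + constF 2 (1 / 2) *
      (msubst (fun _ : Fin 1 => Xn 2 0) (Q 1) * msubst (fun _ : Fin 1 => Xn 2 1) (Q 1)) := by
  have hsq : muPow Q 2 2 = _ := muM_two (muPow_eq_zero_of_lt hQ0 one_pos) hQ0
  simp [expMu, Finset.sum_range_succ, muPow_zero_of_ne_zero, hsq, muPow_one, constF, toF]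

lemma Fay_two (A : Mould) :
    Fay A 2 = A 2 + msubst (fayArgs 2 1) (A 2) + msubst (fayArgs 2 2) (A 2) := by
  rw [Fay, show Finset.Icc 1 2 = {1, 2} from rfl, Finset.sum_pair (by norm_num), add_assoc]

lemma fayArgs_two_one : fayArgs 2 1 = ![-(Xn 2 0), Xn 2 0 + Xn 2 1] := by
  funext m
  fin_cases m <;> simp [fayArgs, sumXn, Finset.sum_range_succ]

lemma fayArgs_two_two : fayArgs 2 2 = ![Xn 2 1, -(Xn 2 0 + Xn 2 1)] := by
  funext m
  fin_cases m <;> simp [fayArgs, sumXn, Finset.sum_range_succ]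

lemma injective_aeval_fayArgs_two_one : Function.Injective (aeval (R := ℚ) (fayArgs 2 1)) := by
  refine injective_aeval_of_leftInverse ![-X 0, X 0 + X 1] fun m => ?_
  fin_cases m <;> simp [fayArgs_two_one, Xn]

lemma injective_aeval_fayArgs_two_two : Function.Injective (aeval (R := ℚ) (fayArgs 2 2)) := by
  refine injective_aeval_of_leftInverse ![-X 0 - X 1, X 0] fun m => ?_
  fin_cases m <;> simp [fayArgs_two_two, Xn]

lemma msubst_msubst_Xn {s r : ℕ} {ℓ : Fin s → MPoly r}
    (hℓ : Function.Injective (aeval (R := ℚ) ℓ)) {k : ℕ} (hk : k < s) (B : MFrac 1) :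
    msubst ℓ (msubst (fun _ : Fin 1 => Xn s k) B) = msubst (fun _ => ℓ ⟨k, hk⟩) B := by
  have hXn : Function.Injective (aeval (R := ℚ) fun _ : Fin 1 => Xn s k) :=
    injective_aeval_of_leftInverse (fun _ => X 0) fun m => by simp [Xn, hk, Fin.fin_one_eq_zero m]
  rw [msubst_msubst hℓ hXn]
  simp [Xn, hk]

/-- **Depth-2 Fay correction of the exponential (§3.3).** Let `Q ∈ ARI` and let
`E := exp_mu(Q)`.  Then
`ℱ(E)(u_1,u_2) = ℱ(Q)(u_1,u_2)
  + (1/2)·(E(u_1)E(u_2) + E(−u_1)E(u_1+u_2) + E(u_2)E(−u_1−u_2))`. -/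
theorem fay_expMu_depth_two (Q : Mould) (hQ0 : Q 0 = 0) :
    Fay (expMu Q) 2
      = Fay Q 2 + constF 2 (1 / 2) *
          (msubst (fun _ : Fin 1 => Xn 2 0) (expMu Q 1) *
              msubst (fun _ : Fin 1 => Xn 2 1) (expMu Q 1)
            + msubst (fun _ : Fin 1 => -(Xn 2 0)) (expMu Q 1) *
              msubst (fun _ : Fin 1 => Xn 2 0 + Xn 2 1) (expMu Q 1)
            + msubst (fun _ : Fin 1 => Xn 2 1) (expMu Q 1) *
              msubst (fun _ : Fin 1 => -(Xn 2 0 + Xn 2 1)) (expMu Q 1)) := by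
  have h₁ := injective_aeval_fayArgs_two_one
  have h₂ := injective_aeval_fayArgs_two_two
  rw [Fay_two, Fay_two, expMu_one, expMu_two hQ0]
  simp only [msubst_add h₁, msubst_add h₂, msubst_mul h₁, msubst_mul h₂, msubst_constF h₁,
    msubst_constF h₂]
  rw [msubst_msubst_Xn h₁ two_pos, msubst_msubst_Xn h₁ one_lt_two, msubst_msubst_Xn h₂ two_pos,
    msubst_msubst_Xn h₂ one_lt_two]
  simp only [fayArgs_two_one, fayArgs_two_two, Fin.zero_eta, Fin.mk_one, Matrix.cons_val_zero,
    Matrix.cons_val_one]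
  ring

end
end

section
/- Core identity of Appendix B (equation (B.2)): Fix an even integer r ≥ 2 and let T'_r(u_1,…,u_r) := ( Σ_{i=1}^{r} (−1)^{i−1} · C(r−1, i−1) · u_i ) / (u_1 u_2 ⋯ u_r) ∈ ℚ(u_1,…,u_r), where C(n,k) denotes the binomial coefficient. Then, with ū_j := u_1+⋯+u_j: T'_r(u_1,…,u_r) + Σ_{j=1}^{r−1} T'_r(u_2,…,u_j, −ū_j, ū_{j+1}, u_{j+2},…,u_r) + T'_r(u_2,…,u_r, −ū_r) = 0 (each term being the substitution of the indicated ℚ-linearly independent linear forms into the rational function T'_r; the j = 1 term is T'_r(−u_1, u_1+u_2, u_3,…,u_r)). -/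
/-!
Moulds over ℚ: a mould is a family `A = (A_r)_{r ≥ 0}` where `A_r` lies in the
field `ℚ(u_1, …, u_r)` of rational functions in `r` commuting variables,
realized here as the fraction field of `MvPolynomial (Fin r) ℚ`.
Substitution of ℚ-linearly independent linear forms is realized by lifting the
corresponding (injective) polynomial substitution map to the fraction fields.
-/

noncomputable section

/-- `T'_r := (Σ_{i=1}^r (−1)^{i−1}·C(r−1,i−1)·u_i)/(u_1⋯u_r) ∈ ℚ(u_1,…,u_r)`. -/
def Tprime (r : ℕ) : MFrac r :=
  toF (∑ i ∈ Finset.range r, MvPolynomial.C ((-1 : ℚ) ^ i * ((r - 1).choose i : ℚ)) * Xn r i)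
    / toF (∏ k ∈ Finset.range r, Xn r k)

/-!
Write `T'_r = (∑ₘ cₘ u_{m+1}) / (u₁⋯u_r)`. The identity holds in any field and for any
coefficients with `c₀ + c_{r-1} = 0`. Multiplied by `u₂⋯u_r`, the Fay term of index `i < r` has
denominator `ū_i ū_{i+1}`, and since `u_{i+1} = ū_{i+1} - ū_i` it is a difference `Φ_i - Φ_{i-1}`
of consecutive values of a potential `Φ_i = (linear form) / ū_{i+1}`. The middle terms telescope,
the first and last terms cancel the two boundary values of `Φ` up to `c₀ + c_{r-1}`, and for
`cₘ = (-1)ᵐ C(r-1, m)` this is `1 + (-1)^{r-1} = 0` when `r` is even. Over `ℚ(u₁,…,u_r)` the Fay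
substitutions are invertible, so substitution acts on `T'_r` as evaluation at the Fay arguments.
-/

open Finset

section FayVals

variable {R : Type*} [AddCommGroup R]

def fayVals (x : ℕ → R) (i m : ℕ) : R :=
  if m + 1 < i then x (m + 1)
  else if m + 1 = i then -∑ k ∈ range i, x k
  else if m = i then ∑ k ∈ range (i + 1), x k
  else x m

def fayInvVals (y : ℕ → R) (i k : ℕ) : R :=
  if k = 0 then -∑ m ∈ range i, y m
  else if k < i then y (k - 1)
  else if k = i then y i + y (i - 1)
  else y k

lemma fayArgs_eq_fayVals (r i : ℕ) (m : Fin r) : fayArgs r i m = fayVals (Xn r) i m := rfl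

lemma map_fayVals {S F : Type*} [AddCommGroup S] [FunLike F R S] [AddMonoidHomClass F R S]
    (φ : F) (x : ℕ → R) (i m : ℕ) : φ (fayVals x i m) = fayVals (fun k => φ (x k)) i m := by
  unfold fayVals
  split_ifs <;> simp only [map_neg, map_sum]

lemma fayVals_congr {x y : ℕ → R} {r i m : ℕ} (h : ∀ k < r, x k = y k) (hi : i ≤ r) (hm : m < r) :
    fayVals x i m = fayVals y i m := by
  have hsum : ∀ n ≤ r, ∑ k ∈ range n, x k = ∑ k ∈ range n, y k := fun n hn =>
    sum_congr rfl fun k hk => h k (by have := mem_range.mp hk; omega)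
  unfold fayVals
  split_ifs <;> first | exact h _ (by omega) | rw [hsum _ (by omega)]

lemma sum_range_fayInvVals (y : ℕ → R) {i : ℕ} (hi : 1 ≤ i) :
    ∑ k ∈ range i, fayInvVals y i k = -y (i - 1) := by
  obtain ⟨j, rfl⟩ : ∃ j, i = j + 1 := ⟨i - 1, by omega⟩
  have hshift : ∀ k ∈ range j, fayInvVals y (j + 1) (k + 1) = y k := fun k hk => by
    simp [fayInvVals, mem_range.mp hk]
  rw [sum_range_succ', sum_congr rfl hshift, fayInvVals, if_pos rfl, sum_range_succ]
  simp

lemma fayVals_fayInvVals (y : ℕ → R) {i : ℕ} (hi : 1 ≤ i) (m : ℕ) :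
    fayVals (fayInvVals y i) i m = y m := by
  unfold fayVals
  split_ifs with h₁ h₂ h₃
  · simp [fayInvVals, h₁]
  · rw [sum_range_fayInvVals y hi, neg_neg, ← h₂, Nat.add_sub_cancel]
  · rw [sum_range_succ, sum_range_fayInvVals y hi, fayInvVals, if_neg (by omega), if_neg (by omega),
      if_pos rfl, h₃]
    abel
  · rw [fayInvVals, if_neg (by omega), if_neg (by omega), if_neg (by omega)]

@[to_additive]
lemma prod_range_fayVals_succ {M : Type*} [CommMonoid M] (f : ℕ → R → M) (x : ℕ → R)
    {r j : ℕ} (hj : j + 2 ≤ r) :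
    ∏ m ∈ range r, f m (fayVals x (j + 1) m)
      = (∏ m ∈ range j, f m (x (m + 1))) * f j (-∑ k ∈ range (j + 1), x k)
        * f (j + 1) (∑ k ∈ range (j + 2), x k) * ∏ m ∈ Ico (j + 2) r, f m (x m) := by
  have hlow : ∀ m ∈ range j, f m (fayVals x (j + 1) m) = f m (x (m + 1)) := fun m hm => by
    rw [fayVals, if_pos (by have := mem_range.mp hm; omega)]
  have hhigh : ∀ m ∈ Ico (j + 2) r, f m (fayVals x (j + 1) m) = f m (x m) := fun m hm => by
    have := (mem_Ico.mp hm).1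
    rw [fayVals, if_neg (by omega), if_neg (by omega), if_neg (by omega)]
  rw [← prod_range_mul_prod_Ico _ hj, prod_range_succ, prod_range_succ, prod_congr rfl hlow,
    prod_congr rfl hhigh]
  simp [fayVals]

@[to_additive]
lemma prod_range_fayVals_self {M : Type*} [CommMonoid M] (f : ℕ → R → M) (x : ℕ → R)
    {r : ℕ} (hr : 1 ≤ r) :
    ∏ m ∈ range r, f m (fayVals x r m)
      = (∏ m ∈ range (r - 1), f m (x (m + 1))) * f (r - 1) (-∑ k ∈ range r, x k) := by
  obtain ⟨t, rfl⟩ : ∃ t, r = t + 1 := ⟨r - 1, by omega⟩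
  rw [prod_range_succ,
    prod_congr rfl fun m hm => by rw [fayVals, if_pos (by have := mem_range.mp hm; omega)]]
  simp [fayVals]

end FayVals

section LinearFrac

variable {K : Type*} [Field K]

def linearFrac (c : ℕ → K) (r : ℕ) (v : ℕ → K) : K :=
  (∑ m ∈ range r, c m * v m) / ∏ m ∈ range r, v m

lemma linearFrac_congr (c : ℕ → K) {r : ℕ} {v w : ℕ → K} (h : ∀ m < r, v m = w m) :
    linearFrac c r v = linearFrac c r w := by
  unfold linearFrac
  rw [sum_congr rfl fun m hm => by rw [h m (mem_range.mp hm)],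
    prod_congr rfl fun m hm => h m (mem_range.mp hm)]

def fayPotential (c x : ℕ → K) (r j : ℕ) : K :=
  (∑ m ∈ range j, c m * x (m + 1) + ∑ m ∈ Ico (j + 1) r, c m * x m) / ∑ k ∈ range (j + 1), x k

variable (c x : ℕ → K) {r : ℕ}

lemma linearFrac_eq_fayPotential_zero (hr : 1 ≤ r) (hx : ∀ k < r, x k ≠ 0) :
    linearFrac c r x = (fayPotential c x r 0 + c 0) / ∏ m ∈ range (r - 1), x (m + 1) := by
  obtain ⟨t, rfl⟩ : ∃ t, r = t + 1 := ⟨r - 1, by omega⟩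
  have hx0 := hx 0 (by omega)
  have hP : ∏ m ∈ range t, x (m + 1) ≠ 0 :=
    prod_ne_zero_iff.mpr fun m hm => hx _ (by simpa using hm)
  rw [linearFrac, fayPotential, sum_range_eq_add_Ico _ (by omega), prod_range_succ']
  simp only [range_zero, sum_empty, zero_add, sum_range_one, Nat.add_sub_cancel]
  field_simp
  ring

lemma linearFrac_fayVals_succ (hx : ∀ k < r, x k ≠ 0)
    (hb : ∀ n, 1 ≤ n → n ≤ r → ∑ k ∈ range n, x k ≠ 0) {j : ℕ} (hj : j + 2 ≤ r) :
    linearFrac c r (fayVals x (j + 1))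
      = (fayPotential c x r (j + 1) - fayPotential c x r j) / ∏ m ∈ range (r - 1), x (m + 1) := by
  have hsplit : ∏ m ∈ range (r - 1), x (m + 1)
      = x (j + 1) * ((∏ m ∈ range j, x (m + 1)) * ∏ m ∈ Ico (j + 2) r, x m) := by
    rw [← prod_range_mul_prod_Ico _ (show j + 1 ≤ r - 1 by omega), prod_range_succ,
      prod_Ico_add' x, show r - 1 + 1 = r by omega]
    ring
  have hQ : (∏ m ∈ range j, x (m + 1)) * ∏ m ∈ Ico (j + 2) r, x m ≠ 0 :=
    right_ne_zero_of_mul (hsplit ▸ prod_ne_zero_iff.mpr fun m hm => hx _ (by simp at hm; omega))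
  have hxj := hx (j + 1) (by omega)
  have hb₁ := hb (j + 1) (by omega) (by omega)
  have hb₂ := hb (j + 2) (by omega) (by omega)
  rw [sum_range_succ _ (j + 1)] at hb₂
  rw [linearFrac, sum_range_fayVals_succ (fun m y => c m * y) x hj,
    prod_range_fayVals_succ (fun _ y => y) x hj, fayPotential, fayPotential, hsplit,
    sum_range_succ _ (j + 1), sum_range_succ (fun m => c m * x (m + 1)) j,
    sum_eq_sum_Ico_succ_bot (show j + 1 < r by omega)]
  generalize ∑ k ∈ range (j + 1), x k = b at *
  field_simp
  ring

lemma linearFrac_fayVals_self (hr : 1 ≤ r) (hb : ∑ k ∈ range r, x k ≠ 0) :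
    linearFrac c r (fayVals x r)
      = (c (r - 1) - fayPotential c x r (r - 1)) / ∏ m ∈ range (r - 1), x (m + 1) := by
  rw [linearFrac, sum_range_fayVals_self (fun m y => c m * y) x hr,
    prod_range_fayVals_self (fun _ y => y) x hr, fayPotential, Nat.sub_add_cancel hr, Ico_self,
    sum_empty, add_zero]
  field_simp
  ring

theorem linearFrac_add_sum_linearFrac_fayVals (hr : 1 ≤ r) (hx : ∀ k < r, x k ≠ 0)
    (hb : ∀ n, 1 ≤ n → n ≤ r → ∑ k ∈ range n, x k ≠ 0) :
    linearFrac c r x + ∑ i ∈ Icc 1 r, linearFrac c r (fayVals x i)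
      = (c 0 + c (r - 1)) / ∏ m ∈ range (r - 1), x (m + 1) := by
  obtain ⟨t, rfl⟩ : ∃ t, r = t + 1 := ⟨r - 1, by omega⟩
  have hmiddle : ∑ i ∈ Icc 1 t, linearFrac c (t + 1) (fayVals x i)
      = ∑ j ∈ range t, (fayPotential c x (t + 1) (j + 1) - fayPotential c x (t + 1) j)
          / ∏ m ∈ range t, x (m + 1) := by
    rw [← Ico_add_one_right_eq_Icc, sum_Ico_eq_sum_range, Nat.add_sub_cancel]
    refine sum_congr rfl fun j hj => ?_
    rw [add_comm 1 j]
    exact linearFrac_fayVals_succ c x hx hb (by have := mem_range.mp hj; omega)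
  rw [sum_Icc_succ_top (by omega), hmiddle, ← sum_div, sum_range_sub,
    linearFrac_eq_fayPotential_zero c x hr hx,
    linearFrac_fayVals_self c x hr (hb _ hr le_rfl), Nat.add_sub_cancel]
  ring

end LinearFrac

section Substitution

variable {r : ℕ}

lemma msubst_toF_div {s : ℕ} {ℓ : Fin s → MPoly r}
    (hℓ : Function.Injective (MvPolynomial.aeval (R := ℚ) ℓ)) (p q : MPoly s) :
    msubst ℓ (toF p / toF q) = toF (MvPolynomial.aeval ℓ p) / toF (MvPolynomial.aeval ℓ q) := by
  have hinj : Function.Injective ((algebraMap (MPoly r) (MFrac r)).comp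
      (MvPolynomial.aeval (R := ℚ) ℓ).toRingHom) :=
    (IsFractionRing.injective (MPoly r) (MFrac r)).comp hℓ
  rw [msubst, dif_pos hinj, map_div₀]
  simp only [toF, IsFractionRing.lift_algebraMap]
  rfl

lemma injective_aeval_fayArgs {i : ℕ} (hi₁ : 1 ≤ i) (hi₂ : i ≤ r) :
    Function.Injective (MvPolynomial.aeval (R := ℚ) (fayArgs r i)) := by
  let inv : Fin r → MPoly r := fun k => fayInvVals (Xn r) i k
  have hleft :
      (MvPolynomial.aeval inv).comp (MvPolynomial.aeval (fayArgs r i)) = AlgHom.id ℚ _ := by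
    refine MvPolynomial.algHom_ext fun m => ?_
    have hXn : ∀ k < r, MvPolynomial.aeval inv (Xn r k) = fayInvVals (Xn r) i k := fun k hk => by
      simp [Xn, hk, inv]
    rw [AlgHom.comp_apply, MvPolynomial.aeval_X, fayArgs_eq_fayVals, map_fayVals,
      fayVals_congr hXn hi₂ m.isLt, fayVals_fayInvVals _ hi₁]
    simp [Xn]
  exact Function.LeftInverse.injective (g := MvPolynomial.aeval inv) fun p => by
    rw [← AlgHom.comp_apply, hleft, AlgHom.id_apply]

def tprimeCoeff (r m : ℕ) : MFrac r := constF r ((-1 : ℚ) ^ m * ((r - 1).choose m : ℚ))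

lemma toF_div_eq_linearFrac_tprimeCoeff (y : ℕ → MPoly r) :
    toF (∑ m ∈ range r, MvPolynomial.C ((-1 : ℚ) ^ m * ((r - 1).choose m : ℚ)) * y m)
        / toF (∏ m ∈ range r, y m)
      = linearFrac (tprimeCoeff r) r fun m => toF (y m) := by
  simp only [linearFrac, tprimeCoeff, constF, toF, map_sum, map_prod, map_mul]

lemma Tprime_eq_linearFrac : Tprime r = linearFrac (tprimeCoeff r) r fun m => toF (Xn r m) := by
  rw [Tprime, toF_div_eq_linearFrac_tprimeCoeff]

lemma msubst_fayArgs_Tprime {i : ℕ} (hi₁ : 1 ≤ i) (hi₂ : i ≤ r) :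
    msubst (fayArgs r i) (Tprime r)
      = linearFrac (tprimeCoeff r) r (fayVals (fun m => toF (Xn r m)) i) := by
  rw [Tprime, msubst_toF_div (injective_aeval_fayArgs hi₁ hi₂), map_sum, map_prod]
  simp only [map_mul (MvPolynomial.aeval (fayArgs r i)), MvPolynomial.aeval_C,
    MvPolynomial.algebraMap_eq]
  rw [toF_div_eq_linearFrac_tprimeCoeff]
  refine linearFrac_congr _ fun m hm => ?_
  simp only [Xn, hm, dite_true, MvPolynomial.aeval_X]
  exact map_fayVals (algebraMap (MPoly r) (MFrac r)) (Xn r) i m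

end Substitution

section Nonvanishing

variable {r : ℕ}

lemma toF_ne_zero {p : MPoly r} (hp : p ≠ 0) : toF p ≠ 0 :=
  (map_ne_zero_iff _ (IsFractionRing.injective (MPoly r) (MFrac r))).mpr hp

lemma toF_Xn_ne_zero {k : ℕ} (hk : k < r) : toF (Xn r k) ≠ 0 :=
  toF_ne_zero (by simp [Xn, hk])

lemma sum_toF_Xn_ne_zero {n : ℕ} (hn₁ : 1 ≤ n) (hn₂ : n ≤ r) :
    ∑ k ∈ range n, toF (Xn r k) ≠ 0 := by
  have heval : MvPolynomial.eval (fun _ => (1 : ℚ)) (∑ k ∈ range n, Xn r k) = n := by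
    rw [map_sum, sum_congr rfl fun k hk => by
      rw [Xn, dif_pos (by have := mem_range.mp hk; omega), MvPolynomial.eval_X]]
    simp
  have hne : ∑ k ∈ range n, Xn r k ≠ 0 := fun h => by
    rw [h, map_zero] at heval
    exact_mod_cast (show (n : ℚ) ≠ 0 by positivity) heval.symm
  have := toF_ne_zero hne
  rwa [toF, map_sum] at this

end Nonvanishing

/-- **Equation (B.2).** For every even `r ≥ 2`, with `ū_j := u_1+⋯+u_j`:
`T'_r(u_1,…,u_r) + Σ_{j=1}^{r−1} T'_r(u_2,…,u_j,−ū_j,ū_{j+1},u_{j+2},…,u_r)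
  + T'_r(u_2,…,u_r,−ū_r) = 0`. -/
theorem eq_B_2 (r : ℕ) (hr : 2 ≤ r) (hre : Even r) :
    Tprime r + ∑ i ∈ Finset.Icc 1 r, msubst (fayArgs r i) (Tprime r) = 0 := by
  have hr₁ : 1 ≤ r := by omega
  have hcoeff : tprimeCoeff r 0 + tprimeCoeff r (r - 1) = 0 := by
    have hodd : Odd (r - 1) := Nat.Even.sub_odd hr₁ hre odd_one
    simp only [tprimeCoeff, constF, toF, ← map_add, pow_zero, Nat.choose_zero_right,
      Nat.choose_self, hodd.neg_one_pow]
    norm_num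
  rw [sum_congr rfl fun i hi => msubst_fayArgs_Tprime (mem_Icc.mp hi).1 (mem_Icc.mp hi).2,
    Tprime_eq_linearFrac,
    linearFrac_add_sum_linearFrac_fayVals _ _ hr₁ (fun _ hk => toF_Xn_ne_zero hk)
      (fun _ hn₁ hn₂ => sum_toF_Xn_ne_zero hn₁ hn₂), hcoeff, zero_div]

end
end
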